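/- Let H be a nonzero real Hilbert space and let A : H → H be a continuous self-adjoint linear operator that is coercive, i.e. there exists c > 0 with ⟨A v, v⟩ ≥ c ‖v‖² for all v ∈ H. Suppose μ > 0 is such that μ ⟨A v, v⟩ ≤ ‖A v‖² for all v ∈ H. Then ⟨A v, v⟩ ≥ μ ‖v‖² for all v ∈ H. -/

import Mathlib

/-!
By Lax–Milgram, a coercive operator `A` is surjective, so every `v` is `A w`. The hypothesis at `w`
says `μ ⟪A w, w⟫ ≤ ‖v‖²`, while Cauchy–Schwarz for the positive form `⟪A ·, ·⟫` gives
`‖v‖⁴ = ⟪A w, v⟫ ⟪A v, w⟫ ≤ ⟪A w, w⟫ ⟪A v, v⟫`. Together, `μ ‖v‖⁴ ≤ ‖v‖² ⟪A v, v⟫`; this is the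
inequality `A⁻¹ ≤ μ⁻¹` turned into `μ ≤ A`.
-/

open scoped RealInnerProductSpace

section

variable {H : Type*} [NormedAddCommGroup H] [InnerProductSpace ℝ H]

theorem LinearMap.inner_apply_mul_inner_apply_le {T : H →ₗ[ℝ] H} (hT : ∀ x, 0 ≤ ⟪T x, x⟫)
    (x y : H) : ⟪T x, y⟫ * ⟪T y, x⟫ ≤ ⟪T x, x⟫ * ⟪T y, y⟫ :=
  LinearMap.BilinForm.apply_mul_apply_le_of_forall_zero_le ((innerₗ H).comp T) hT x y

theorem LinearMap.IsSymmetric.mul_norm_sq_le_inner_apply_self_of_surjective {T : H →ₗ[ℝ] H}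
    (hT : T.IsSymmetric) (hpos : ∀ x, 0 ≤ ⟪T x, x⟫) (hsurj : Function.Surjective T) {μ : ℝ}
    (h : ∀ x, μ * ⟪T x, x⟫ ≤ ‖T x‖ ^ 2) (v : H) : μ * ‖v‖ ^ 2 ≤ ⟪T v, v⟫ := by
  rcases le_or_gt μ 0 with hμ | hμ
  · nlinarith [hpos v, sq_nonneg ‖v‖]
  rcases eq_or_ne v 0 with rfl | hv
  · simp
  obtain ⟨w, rfl⟩ := hsurj v
  have hcs : ‖T w‖ ^ 2 * ‖T w‖ ^ 2 ≤ ⟪T w, w⟫ * ⟪T (T w), T w⟫ := by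
    simpa only [hT (T w) w, real_inner_self_eq_norm_sq] using
      inner_apply_mul_inner_apply_le hpos w (T w)
  refine le_of_mul_le_mul_left ?_ (by positivity : 0 < ‖T w‖ ^ 2)
  calc ‖T w‖ ^ 2 * (μ * ‖T w‖ ^ 2) = μ * (‖T w‖ ^ 2 * ‖T w‖ ^ 2) := by ring
    _ ≤ μ * (⟪T w, w⟫ * ⟪T (T w), T w⟫) := by gcongr
    _ = (μ * ⟪T w, w⟫) * ⟪T (T w), T w⟫ := by ring
    _ ≤ ‖T w‖ ^ 2 * ⟪T (T w), T w⟫ := mul_le_mul_of_nonneg_right (h w) (hpos (T w))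

theorem ContinuousLinearMap.surjective_of_coercive [CompleteSpace H] (A : H →L[ℝ] H) {c : ℝ}
    (hc : 0 < c) (hcoer : ∀ v, c * ‖v‖ ^ 2 ≤ ⟪A v, v⟫) : Function.Surjective A := by
  have hB : IsCoercive ((innerSL ℝ).comp A) :=
    ⟨c, hc, fun v => by simpa [sq, mul_assoc] using hcoer v⟩
  have hA : InnerProductSpace.continuousLinearMapOfBilin ((innerSL ℝ).comp A) = A :=
    ContinuousLinearMap.ext fun v =>
      (InnerProductSpace.unique_continuousLinearMapOfBilin _ fun w => by simp).symm
  have hrange := hB.range_eq_top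
  rw [hA] at hrange
  exact LinearMap.range_eq_top.mp hrange

end

theorem coercivity_of_rayleigh_bound_general
    {H : Type*} [NormedAddCommGroup H] [InnerProductSpace ℝ H] [CompleteSpace H]
    (A : H →L[ℝ] H)
    (hsa : ∀ u v : H, ⟪A u, v⟫ = ⟪u, A v⟫)
    (c : ℝ) (hc : 0 < c) (hcoer : ∀ v : H, c * ‖v‖ ^ 2 ≤ ⟪A v, v⟫)
    (μ : ℝ) (h : ∀ v : H, μ * ⟪A v, v⟫ ≤ ‖A v‖ ^ 2) :
    ∀ v : H, μ * ‖v‖ ^ 2 ≤ ⟪A v, v⟫ := by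
  have hpos (v : H) : 0 ≤ ⟪A v, v⟫ := (mul_nonneg hc.le (sq_nonneg ‖v‖)).trans (hcoer v)
  exact LinearMap.IsSymmetric.mul_norm_sq_le_inner_apply_self_of_surjective
    (T := (A : H →ₗ[ℝ] H)) hsa hpos (A.surjective_of_coercive hc hcoer) h

/-- If `A` is a continuous self-adjoint coercive operator on a nonzero real
Hilbert space and `μ > 0` satisfies `μ ⟨A v, v⟩ ≤ ‖A v‖²` for all `v`, then
`⟨A v, v⟩ ≥ μ ‖v‖²` for all `v`. -/
theorem coercivity_of_rayleigh_bound
    {H : Type*} [NormedAddCommGroup H] [InnerProductSpace ℝ H] [CompleteSpace H] [Nontrivial H]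
    (A : H →L[ℝ] H)
    (hsa : ∀ u v : H, ⟪A u, v⟫ = ⟪u, A v⟫)
    (c : ℝ) (hc : 0 < c) (hcoer : ∀ v : H, c * ‖v‖ ^ 2 ≤ ⟪A v, v⟫)
    (μ : ℝ) (hμ : 0 < μ) (h : ∀ v : H, μ * ⟪A v, v⟫ ≤ ‖A v‖ ^ 2) :
    ∀ v : H, μ * ‖v‖ ^ 2 ≤ ⟪A v, v⟫ :=
  coercivity_of_rayleigh_bound_general A hsa c hc hcoer μ h
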